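/- arXiv:2412.14315 — 2 statements merged into one kernel-verified Lean document; each statement's English description precedes it below -/
import Mathlib

section
/- Let G be drawn from a distribution in NSSBM(n,p,p̄,q). There is a universal constant C > 0 such that for every δ ∈ (0,1), with probability at least 1 − δ, every vertex v ∈ V satisfies ‖a_v − a★_v‖₁ ≤ C·(n·p̄ + √(n·p̄·log(n/δ)) + log(n/δ)) and ‖l_v − E[l_v]‖₁ ≤ C·(n·p̄ + √(n·p̄·log(n/δ)) + log(n/δ)), where a_v and l_v denote the v-th rows of the adjacency matrix A and the Laplacian L respectively, and a★_v the v-th row of E[A]. -/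
open Matrix MeasureTheory
open scoped BigOperators ENNReal Classical

noncomputable section

instance measSG {n : ℕ} : MeasurableSpace (SimpleGraph (Fin n)) := ⊤

variable {n : ℕ}

/-- Adjacency matrix of a graph, over `ℝ`. -/
def adjM (G : SimpleGraph (Fin n)) : Matrix (Fin n) (Fin n) ℝ :=
  Matrix.of fun v w => if G.Adj v w then 1 else 0

/-- Laplacian of a weighted adjacency matrix. -/
def wlap (W : Matrix (Fin n) (Fin n) ℝ) : Matrix (Fin n) (Fin n) ℝ :=
  Matrix.diagonal (fun v => ∑ w, W v w) - W

/-- Unnormalized Laplacian of a graph. -/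
def lap (G : SimpleGraph (Fin n)) : Matrix (Fin n) (Fin n) ℝ := wlap (adjM G)

/-- `eig M k` is the `(k+1)`-st smallest eigenvalue (root of the characteristic
polynomial, with multiplicity) of `M`; e.g. `eig M 1 = λ₂`. -/
def eig (M : Matrix (Fin n) (Fin n) ℝ) (k : ℕ) : ℝ :=
  (M.charpoly.roots.sort (· ≤ ·)).getD k 0

def IsUnitEigenvector (M : Matrix (Fin n) (Fin n) ℝ) (t : ℝ) (u : Fin n → ℝ) : Prop :=
  M.mulVec u = t • u ∧ ∑ v, (u v) ^ 2 = 1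

/-- Membership in the first community `P₁ = {1, …, n/2}`. -/
def inP1 (n : ℕ) (v : Fin n) : Prop := (v : ℕ) < n / 2

/-- `v` and `w` are in the same community. -/
def sameSide (n : ℕ) (v w : Fin n) : Prop := inP1 n v ↔ inP1 n w

/-- Number of neighbours of `v` in its own community. -/
def din (G : SimpleGraph (Fin n)) (v : Fin n) : ℕ :=
  Nat.card {w : Fin n // G.Adj v w ∧ sameSide n v w}

/-- Number of neighbours of `v` in the other community. -/
def dout (G : SimpleGraph (Fin n)) (v : Fin n) : ℕ :=
  Nat.card {w : Fin n // G.Adj v w ∧ ¬ sameSide n v w}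

/-- Degree of `v`. -/
def deg (G : SimpleGraph (Fin n)) (v : Fin n) : ℕ :=
  Nat.card {w : Fin n // G.Adj v w}

/-- `μ` samples each pair `(v,w)`, `v < w`, as an edge independently with probability `P v w`. -/
def IsEdgeProduct (P : Fin n → Fin n → ℝ) (μ : PMF (SimpleGraph (Fin n))) : Prop :=
  ∀ G : SimpleGraph (Fin n),
    μ G = ∏ e ∈ Finset.univ.filter (fun e : Fin n × Fin n => e.1 < e.2),
      (if G.Adj e.1 e.2 then ENNReal.ofReal (P e.1 e.2) else ENNReal.ofReal (1 - P e.1 e.2))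

/-- The edge-probability matrix of a member of the `NSSBM(n,p,p̄,q)` family. -/
def NSSBMprob (n : ℕ) (p pbar q : ℝ) (P : Fin n → Fin n → ℝ) : Prop :=
  (∀ v w, P v w = P w v) ∧
  (∀ v w : Fin n, v ≠ w → sameSide n v w → p ≤ P v w ∧ P v w ≤ pbar) ∧
  (∀ v w : Fin n, ¬ sameSide n v w → P v w = q)

/-- The ideal second eigenvector `u₂⋆`. -/
def u2star (n : ℕ) : Fin n → ℝ :=
  fun v => if inP1 n v then 1 / Real.sqrt n else -(1 / Real.sqrt n)

/-- Spectral bisection with matrix `M` recovers the planted partition of `G`. -/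
def BisectCorrect (n : ℕ) (M : Matrix (Fin n) (Fin n) ℝ) : Prop :=
  ∀ u : Fin n → ℝ, IsUnitEigenvector M (eig M 1) u →
    ({v : Fin n | u v < 0} = {v : Fin n | inP1 n v} ∨
     {v : Fin n | u v < 0} = {v : Fin n | ¬ inP1 n v})

/-- Off-diagonal part of the probability matrix: the expected adjacency matrix. -/
def offP (P : Fin n → Fin n → ℝ) : Matrix (Fin n) (Fin n) ℝ :=
  Matrix.of fun v w => if v = w then 0 else P v w

/-- Expected unnormalized Laplacian. -/
def expLap (P : Fin n → Fin n → ℝ) : Matrix (Fin n) (Fin n) ℝ := wlap (offP P)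

/-- Euclidean norm. -/
def l2 (x : Fin n → ℝ) : ℝ := Real.sqrt (∑ v, (x v) ^ 2)

/-- Inner product. -/
def dotp (x y : Fin n → ℝ) : ℝ := ∑ v, x v * y v

/-- Entrywise max (ℓ∞) norm. -/
def linf (x : Fin n → ℝ) : ℝ := ⨆ v, |x v|

/-- ℓ2 → ℓ2 operator norm of a matrix. -/
def opNorm (M : Matrix (Fin n) (Fin n) ℝ) : ℝ :=
  ‖LinearMap.toContinuousLinearMap (Matrix.toEuclideanLin M)‖

/-- The crossing edges of `μ` are independent `Bernoulli(q)`, while the internal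
edges are arbitrary (possibly depending on the crossing edges). -/
def CrossingProduct (n : ℕ) (q : ℝ) (μ : PMF (SimpleGraph (Fin n))) : Prop :=
  ∃ (ν : PMF (SimpleGraph (Fin n))) (κ : SimpleGraph (Fin n) → PMF (SimpleGraph (Fin n))),
    IsEdgeProduct (fun v w => if sameSide n v w then 0 else q) ν ∧
    (∀ H, ∀ G ∈ (κ H).support, ∀ v w, ¬ sameSide n v w → ((G.Adj v w) ↔ H.Adj v w)) ∧
    μ = ν.bind κ
/-!
Both row deviations are controlled by the degree of `v`: entrywise
`|a_vw - a⋆_vw| ≤ a_vw + a⋆_vw`, so `‖a_v - a⋆_v‖₁ ≤ deg v + n p̄`, and the Laplacian row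
deviation is at most twice the adjacency one. A vertex of degree `≥ k` has some `k` neighbours,
so `P(deg v ≥ k) ≤ C(n-1,k) p̄ᵏ ≤ (e n p̄ / k)ᵏ ≤ e⁻ᵏ` once `k ≥ 9 n p̄` (as `e² < 9`). With
`k = ⌈9 n p̄ + log(n/δ)⌉` and a union bound over the vertices, all degrees are below `k` with
probability at least `1 - δ`, and then the claim holds with `C = 20`.
-/

namespace SimpleGraph

variable {V : Type*} [LinearOrder V]

def ofEdgeFun (f : {e : V × V // e.1 < e.2} → Bool) : SimpleGraph V :=
  SimpleGraph.fromRel fun v w => ∃ h : v < w, f ⟨(v, w), h⟩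

lemma ofEdgeFun_adj (f : {e : V × V // e.1 < e.2} → Bool) {v w : V} (h : v < w) :
    (ofEdgeFun f).Adj v w ↔ f ⟨(v, w), h⟩ := by
  simp [ofEdgeFun, h.ne, h, not_lt_of_gt h]

def edgeFunEquiv : ({e : V × V // e.1 < e.2} → Bool) ≃ SimpleGraph V where
  toFun := ofEdgeFun
  invFun G e := decide (G.Adj e.1.1 e.1.2)
  left_inv f := by
    funext e
    simp [ofEdgeFun_adj f e.2]
  right_inv G := by
    ext v w
    rcases lt_trichotomy v w with h | rfl | h
    · simp [ofEdgeFun_adj _ h]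
    · simp
    · rw [adj_comm, ofEdgeFun_adj _ h, adj_comm]
      simp

lemma sum_prod_ite_adj [Fintype V] {R : Type*} [CommSemiring R] (a b : V × V → R) :
    ∑ G : SimpleGraph V, ∏ e ∈ Finset.univ.filter (fun e : V × V => e.1 < e.2),
        (if G.Adj e.1 e.2 then a e else b e) =
      ∏ e ∈ Finset.univ.filter (fun e : V × V => e.1 < e.2), (a e + b e) := by
  have hsub (h : V × V → R) : ∏ e ∈ Finset.univ.filter (fun e : V × V => e.1 < e.2), h e =
      ∏ e : {e : V × V // e.1 < e.2}, h e := Finset.prod_subtype _ (by simp) h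
  simp only [hsub, ← edgeFunEquiv.sum_comp]
  simp only [show ∀ e, a e + b e = ∑ c : Bool, cond c (a e) (b e) from fun e => by simp,
    Fintype.prod_sum]
  refine Fintype.sum_congr _ _ fun f => Fintype.prod_congr _ _ fun e => ?_
  cases hf : f e <;> simp [edgeFunEquiv, ofEdgeFun_adj f e.2, hf]

end SimpleGraph

lemma IsEdgeProduct.measure_forall_adj {P : Fin n → Fin n → ℝ} {μ : PMF (SimpleGraph (Fin n))}
    (hμ : IsEdgeProduct P μ) (hP : ∀ v w : Fin n, v < w → 0 ≤ P v w ∧ P v w ≤ 1)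
    {T : Finset (Fin n × Fin n)} (hT : ∀ e ∈ T, e.1 < e.2) :
    μ.toMeasure {G | ∀ e ∈ T, G.Adj e.1 e.2} = ∏ e ∈ T, ENNReal.ofReal (P e.1 e.2) := by
  set F := Finset.univ.filter (fun e : Fin n × Fin n => e.1 < e.2)
  have hTF : T ⊆ F := fun e he => by simpa [F] using hT e he
  set A := {G : SimpleGraph (Fin n) | ∀ e ∈ T, G.Adj e.1 e.2}
  -- the indicator of `A` is `μ` with the factor of a missing edge of `T` replaced by `0`
  have hind (G : SimpleGraph (Fin n)) : A.indicator μ G =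
      ∏ e ∈ F, if G.Adj e.1 e.2 then ENNReal.ofReal (P e.1 e.2)
        else if e ∈ T then 0 else ENNReal.ofReal (1 - P e.1 e.2) := by
    by_cases hG : G ∈ A
    · rw [Set.indicator_of_mem hG, hμ G]
      refine Finset.prod_congr rfl fun e _ => ?_
      by_cases he : G.Adj e.1 e.2
      · simp [he]
      · have heT : e ∉ T := fun heT => he (hG e heT)
        simp [he, heT]
    · obtain ⟨e, heT, he⟩ := not_forall₂.1 hG
      rw [Set.indicator_of_notMem hG, Finset.prod_eq_zero (hTF heT) (by simp [he, heT])]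
  have hpair : ∀ e ∈ F, ENNReal.ofReal (P e.1 e.2) + ENNReal.ofReal (1 - P e.1 e.2) = 1 :=
    fun e he => by
      obtain ⟨h0, h1⟩ := hP e.1 e.2 (by simpa [F] using he)
      rw [← ENNReal.ofReal_add h0 (by linarith)]
      simp
  rw [PMF.toMeasure_apply μ MeasurableSpace.measurableSet_top, tsum_fintype]
  simp only [hind]
  rw [SimpleGraph.sum_prod_ite_adj, ← Finset.inter_eq_right.2 hTF, ← Finset.prod_ite_mem]
  refine Finset.prod_congr rfl fun e he => ?_
  by_cases heT : e ∈ T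
  · simp [heT, he]
  · simp [heT, hpair e he]

lemma IsEdgeProduct.measure_le_degree_le {P : Fin n → Fin n → ℝ} {μ : PMF (SimpleGraph (Fin n))}
    (hμ : IsEdgeProduct P μ) {b : ℝ} (hP : ∀ v w : Fin n, v ≠ w → 0 ≤ P v w ∧ P v w ≤ b)
    (hb : b ≤ 1) (v : Fin n) (k : ℕ) :
    μ.toMeasure {G | k ≤ G.degree v} ≤ (n - 1).choose k * ENNReal.ofReal b ^ k := by
  set edge : Fin n → Fin n × Fin n := fun w => (min v w, max v w)
  have hadj (G : SimpleGraph (Fin n)) (w : Fin n) : G.Adj (edge w).1 (edge w).2 ↔ G.Adj v w := by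
    rcases le_total v w with h | h <;> simp [edge, h, SimpleGraph.adj_comm]
  have hedge_inj : Function.Injective edge := by
    intro w w' h
    simp only [edge, Prod.ext_iff] at h
    rcases le_total v w with h1 | h1 <;> rcases le_total v w' with h2 | h2 <;>
      simp_all
  have hcover : {G : SimpleGraph (Fin n) | k ≤ G.degree v} ⊆
      ⋃ S ∈ (Finset.univ.erase v).powersetCard k, {G | ∀ e ∈ S.image edge, G.Adj e.1 e.2} := by
    intro G hG
    obtain ⟨S, hS, hcard⟩ := Finset.exists_subset_card_eq (s := G.neighborFinset v)
      (by simpa using hG)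
    refine Set.mem_iUnion₂.2 ⟨S, Finset.mem_powersetCard.2 ⟨fun w hw => ?_, hcard⟩, ?_⟩
    · have := G.mem_neighborFinset v w |>.1 (hS hw)
      exact Finset.mem_erase.2 ⟨this.ne', Finset.mem_univ w⟩
    · simp only [Set.mem_ofPred_eq, Finset.forall_mem_image, hadj]
      exact fun w hw => (G.mem_neighborFinset v w).1 (hS hw)
  have hcyl (S : Finset (Fin n)) (hS : S ∈ (Finset.univ.erase v).powersetCard k) :
      μ.toMeasure {G | ∀ e ∈ S.image edge, G.Adj e.1 e.2} ≤ ENNReal.ofReal b ^ k := by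
    obtain ⟨hSv, hcard⟩ := Finset.mem_powersetCard.1 hS
    have hne : ∀ w ∈ S, v ≠ w := fun w hw => (Finset.ne_of_mem_erase (hSv hw)).symm
    have hlt : ∀ e ∈ S.image edge, e.1 < e.2 := by
      simp only [Finset.forall_mem_image, edge]
      exact fun w hw => min_lt_max.2 (hne w hw)
    rw [hμ.measure_forall_adj (fun x y hxy => ⟨(hP x y hxy.ne).1, (hP x y hxy.ne).2.trans hb⟩) hlt,
      Finset.prod_image hedge_inj.injOn, ← hcard, ← Finset.prod_const]
    refine Finset.prod_le_prod' fun w hw => ENNReal.ofReal_le_ofReal (hP _ _ ?_).2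
    exact (hlt _ (Finset.mem_image_of_mem edge hw)).ne
  calc μ.toMeasure {G | k ≤ G.degree v}
      ≤ ∑ S ∈ (Finset.univ.erase v).powersetCard k,
          μ.toMeasure {G | ∀ e ∈ S.image edge, G.Adj e.1 e.2} :=
        (measure_mono hcover).trans (measure_biUnion_finset_le _ _)
    _ ≤ ∑ S ∈ (Finset.univ.erase v).powersetCard k, ENNReal.ofReal b ^ k :=
        Finset.sum_le_sum hcyl
    _ = (n - 1).choose k * ENNReal.ofReal b ^ k := by simp

lemma Nat.choose_mul_pow_le_exp_neg {m k : ℕ} {b : ℝ} (hb : 0 ≤ b) (hk : 9 * (m * b) ≤ k) :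
    (m.choose k : ℝ) * b ^ k ≤ Real.exp (-k) := by
  have hninth : (1 / 9 : ℝ) ≤ Real.exp (-2) := by
    rw [show (-2 : ℝ) = -1 + -1 by norm_num, Real.exp_add, ← sq, Real.exp_neg, inv_pow,
      one_div]
    gcongr
    nlinarith [Real.exp_one_lt_d9, Real.exp_pos 1]
  calc (m.choose k : ℝ) * b ^ k ≤ (m : ℝ) ^ k / k.factorial * b ^ k := by
        gcongr; exact Nat.choose_le_pow_div k m
    _ = (m * b) ^ k / k.factorial := by ring
    _ ≤ (k / 9) ^ k / k.factorial := by
        gcongr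
        linarith
    _ = (k : ℝ) ^ k / k.factorial * (1 / 9) ^ k := by ring
    _ ≤ Real.exp k * Real.exp (-2) ^ k := by
        gcongr; exact Real.pow_div_factorial_le_exp (x := k) k.cast_nonneg k
    _ = Real.exp (-k) := by rw [← Real.exp_nat_mul, ← Real.exp_add]; ring_nf

lemma IsEdgeProduct.measure_iUnion_le_degree_le {P : Fin n → Fin n → ℝ}
    {μ : PMF (SimpleGraph (Fin n))} (hμ : IsEdgeProduct P μ) {b δ : ℝ}
    (hP : ∀ v w : Fin n, v ≠ w → 0 ≤ P v w ∧ P v w ≤ b) (hb : 0 ≤ b) (hb1 : b ≤ 1)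
    (hn : n ≠ 0) (hδ : 0 < δ) {k : ℕ} (hk : 9 * (n * b) ≤ k) (hkδ : Real.log (n / δ) ≤ k) :
    μ.toMeasure (⋃ v, {G | k ≤ G.degree v}) ≤ ENNReal.ofReal δ := by
  have htail : ((n - 1).choose k : ℝ) * b ^ k ≤ δ / n := calc
    _ ≤ Real.exp (-k) := by
        refine Nat.choose_mul_pow_le_exp_neg hb ?_
        have : ((n - 1 : ℕ) : ℝ) ≤ n := by exact_mod_cast n.sub_le 1
        nlinarith
    _ ≤ Real.exp (-Real.log (n / δ)) := by gcongr
    _ = δ / n := by rw [Real.exp_neg, Real.exp_log (by positivity), inv_div]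
  calc μ.toMeasure (⋃ v, {G | k ≤ G.degree v})
      ≤ ∑ v, μ.toMeasure {G | k ≤ G.degree v} := measure_iUnion_fintype_le _ _
    _ ≤ ∑ v : Fin n, ENNReal.ofReal (δ / n) := Finset.sum_le_sum fun v _ => by
        grw [hμ.measure_le_degree_le hP hb1 v k, ← ENNReal.ofReal_pow hb,
          ← ENNReal.ofReal_natCast, ← ENNReal.ofReal_mul (by positivity), htail]
    _ = ENNReal.ofReal δ := by
        rw [Finset.sum_const, Finset.card_univ, Fintype.card_fin, nsmul_eq_mul,
          ← ENNReal.ofReal_natCast, ← ENNReal.ofReal_mul (by positivity),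
          mul_div_cancel₀ _ (by positivity)]

lemma wlap_sub_wlap (W W' : Matrix (Fin n) (Fin n) ℝ) : wlap W - wlap W' = wlap (W - W') := by
  ext v w
  simp only [wlap, Matrix.sub_apply, Matrix.diagonal_apply, Finset.sum_sub_distrib]
  split_ifs <;> ring

lemma sum_abs_wlap_le (D : Matrix (Fin n) (Fin n) ℝ) (v : Fin n) :
    ∑ w, |wlap D v w| ≤ 2 * ∑ w, |D v w| := by
  calc ∑ w, |wlap D v w| ≤ ∑ w, (|Matrix.diagonal (fun u => ∑ x, D u x) v w| + |D v w|) :=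
        Finset.sum_le_sum fun w _ => abs_sub _ _
    _ = |∑ x, D v x| + ∑ w, |D v w| := by
        simp [Finset.sum_add_distrib, Matrix.diagonal_apply, apply_ite abs]
    _ ≤ 2 * ∑ w, |D v w| := by linarith [Finset.abs_sum_le_sum_abs (fun x => D v x) Finset.univ]

lemma sum_adjM_eq_degree (G : SimpleGraph (Fin n)) (v : Fin n) :
    ∑ w, adjM G v w = G.degree v := by
  simp [adjM, Finset.sum_boole, ← SimpleGraph.card_neighborFinset_eq_degree,
    SimpleGraph.neighborFinset_eq_filter]

lemma sum_abs_adjM_sub_offP_le (G : SimpleGraph (Fin n)) {P : Fin n → Fin n → ℝ} {b : ℝ}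
    (hb : 0 ≤ b) {v : Fin n} (hP : ∀ w, v ≠ w → 0 ≤ P v w ∧ P v w ≤ b) :
    ∑ w, |adjM G v w - offP P v w| ≤ G.degree v + n * b := by
  have hoff (w : Fin n) : 0 ≤ offP P v w ∧ offP P v w ≤ b := by
    by_cases h : v = w
    · simp [offP, h, hb]
    · simpa [offP, h] using hP w h
  have hadj (w : Fin n) : 0 ≤ adjM G v w := by by_cases h : G.Adj v w <;> simp [adjM, h]
  calc ∑ w, |adjM G v w - offP P v w| ≤ ∑ w, (adjM G v w + b) :=
        Finset.sum_le_sum fun w _ =>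
          abs_sub_le_iff.2 ⟨by linarith [hoff w], by linarith [hoff w, hadj w]⟩
    _ = G.degree v + n * b := by simp [Finset.sum_add_distrib, sum_adjM_eq_degree]

lemma sum_abs_lap_sub_expLap_le (G : SimpleGraph (Fin n)) (P : Fin n → Fin n → ℝ) (v : Fin n) :
    ∑ w, |lap G v w - expLap P v w| ≤ 2 * ∑ w, |adjM G v w - offP P v w| := by
  simpa only [lap, expLap, ← wlap_sub_wlap, Matrix.sub_apply] using
    sum_abs_wlap_le (adjM G - offP P) v

lemma NSSBMprob.nonneg_and_le {p pbar q : ℝ} {P : Fin n → Fin n → ℝ} (hP : NSSBMprob n p pbar q P)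
    (hq : 0 ≤ q) (hqp : q < p) (hp : p ≤ pbar) (v w : Fin n) (hvw : v ≠ w) :
    0 ≤ P v w ∧ P v w ≤ pbar := by
  obtain ⟨-, hin, hout⟩ := hP
  by_cases h : sameSide n v w
  · exact ⟨by linarith [(hin v w hvw h).1], (hin v w hvw h).2⟩
  · rw [hout v w h]
    exact ⟨hq, by linarith⟩

/-- **Lemma (ℓ₁-norm concentration of the rows of `A` and `L`).**
In the NSSBM setting, there is a universal constant `C > 0` such that for every
`δ ∈ (0,1)`, with probability at least `1 - δ`, every vertex `v` satisfies
`‖a_v - a⋆_v‖₁ ≤ C(n p̄ + √(n p̄ log(n/δ)) + log(n/δ))` and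
`‖l_v - E[l_v]‖₁ ≤ C(n p̄ + √(n p̄ log(n/δ)) + log(n/δ))`. -/
theorem row_l1_concentration :
    ∃ C : ℝ, 0 < C ∧ ∀ n : ℕ, Even n →
      ∀ p pbar q δ : ℝ, 0 ≤ q → q < p → p ≤ pbar → pbar ≤ 1 → 0 < δ → δ < 1 →
      ∀ (P : Fin n → Fin n → ℝ) (μ : PMF (SimpleGraph (Fin n))),
        NSSBMprob n p pbar q P → IsEdgeProduct P μ →
        1 - ENNReal.ofReal δ ≤ μ.toMeasure {G |
          ∀ v : Fin n,
            (∑ w, |adjM G v w - offP P v w|) ≤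
              C * ((n : ℝ) * pbar + Real.sqrt ((n : ℝ) * pbar * Real.log (n / δ)) +
                Real.log (n / δ)) ∧
            (∑ w, |lap G v w - expLap P v w|) ≤
              C * ((n : ℝ) * pbar + Real.sqrt ((n : ℝ) * pbar * Real.log (n / δ)) +
                Real.log (n / δ))} := by
  refine ⟨20, by norm_num, fun n _ p pbar q δ hq hqp hppbar hpbar1 hδ hδ1 P μ hP hμ => ?_⟩
  have hPb := hP.nonneg_and_le hq hqp hppbar
  have hpbar : 0 ≤ pbar := by linarith
  rcases Nat.eq_zero_or_pos n with rfl | hn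
  · simp
  set L := Real.log (n / δ)
  have hL : 0 ≤ L :=
    Real.log_nonneg ((one_le_div hδ).2 (by linarith [Nat.one_le_cast (α := ℝ) |>.2 hn]))
  set k := ⌈9 * (n * pbar) + L⌉₊
  have hk : 9 * (n * pbar) + L ≤ k := Nat.le_ceil _
  have hbad := hμ.measure_iUnion_le_degree_le hPb hpbar hpbar1 hn.ne' hδ
    (k := k) (by linarith) (by nlinarith)
  calc 1 - ENNReal.ofReal δ ≤ 1 - μ.toMeasure (⋃ v, {G | k ≤ G.degree v}) :=
        tsub_le_tsub_left hbad 1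
    _ = μ.toMeasure (⋃ v, {G | k ≤ G.degree v})ᶜ :=
        (prob_compl_eq_one_sub MeasurableSpace.measurableSet_top).symm
    _ ≤ _ := measure_mono ?_
  intro G hG v
  have hdeg : (G.degree v : ℝ) < 9 * (n * pbar) + L :=
    Nat.lt_ceil.1 (not_le.1 fun h => hG (Set.mem_iUnion.2 ⟨v, h⟩))
  have hadj := sum_abs_adjM_sub_offP_le G hpbar (hPb v)
  have hlap := sum_abs_lap_sub_expLap_le G P v
  have := Real.sqrt_nonneg (n * pbar * L)
  constructor <;> linarith
end
end

section
/- In the nested block example, let P be the diagonal matrix with P[v,v] = p_{vv} (the expected self-loop weights of A★), and let 𝓛★_nl be the symmetric normalized Laplacian of the weighted graph with adjacency matrix A★ − P. Then ‖𝓛★ − 𝓛★_nl‖_op ≤ 6K/(n − 2). -/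
open Matrix MeasureTheory
open scoped BigOperators ENNReal Classical

noncomputable section

variable {n : ℕ}

/-- Membership in `L₁ = {1, …, n/4}`. -/
def inL1 (n : ℕ) (v : Fin n) : Prop := (v : ℕ) < n / 4

/-- Membership in `L₂ = {n/4+1, …, n/2}`. -/
def inL2 (n : ℕ) (v : Fin n) : Prop := n / 4 ≤ (v : ℕ) ∧ (v : ℕ) < n / 2

/-- Expected (weighted) adjacency matrix of the nested block example, diagonal included. -/
def nestedA (n : ℕ) (p q K : ℝ) : Matrix (Fin n) (Fin n) ℝ :=
  Matrix.of fun v w =>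
    if (inL1 n v ∧ inL1 n w) ∨ (inL2 n v ∧ inL2 n w) then K * p
    else if inP1 n v ∧ inP1 n w then p
    else if ¬ inP1 n v ∧ ¬ inP1 n w then p
    else q

/-- Symmetric normalized Laplacian of a weighted adjacency matrix `M`, with degree
matrix `D_M = diag(M · 1)`. -/
def symLapW (M : Matrix (Fin n) (Fin n) ℝ) : Matrix (Fin n) (Fin n) ℝ :=
  1 - Matrix.diagonal (fun v => 1 / Real.sqrt (∑ w, M v w)) * M *
      Matrix.diagonal (fun v => 1 / Real.sqrt (∑ w, M v w))


/-! Write `d` and `d₀` for the row sums of `M` and of `M` with its diagonal removed. If every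
self-loop carries at most a fraction `ε < 1` of its vertex's degree, then `(1 - ε) d ≤ d₀ ≤ d`.
The difference of the two normalized Laplacians has diagonal entries `-M v v / d v` and
off-diagonal entries `M v w (1 / √(d₀ v d₀ w) - 1 / √(d v d w))`, which lie in
`[0, (ε / (1 - ε)) M v w / √(d v d w)]`; so the Schur test with weights `√d` bounds its operator
norm by `ε + ε / (1 - ε)`. In the nested block example with `n = 4N`, `ε = K / (N (K + 1))`
works, and then `ε + ε / (1 - ε) ≤ 4K / (n - 2)`. -/

theorem opNorm_le_of_weighted_sum_le (A : Matrix (Fin n) (Fin n) ℝ) (h : Fin n → ℝ)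
    (hh : ∀ v, 0 < h v) {R : ℝ} (hR : 0 ≤ R)
    (hrow : ∀ v, ∑ w, |A v w| * h w ≤ R * h v) (hcol : ∀ w, ∑ v, |A v w| * h v ≤ R * h w) :
    opNorm A ≤ R := by
  refine ContinuousLinearMap.opNorm_le_bound _ hR fun x => ?_
  rw [← sq_le_sq₀ (norm_nonneg _) (by positivity), mul_pow, EuclideanSpace.norm_sq_eq,
    EuclideanSpace.norm_sq_eq]
  simp only [Real.norm_eq_abs, sq_abs]
  have hrow_cs : ∀ v, (∑ w, A v w * x w) ^ 2 ≤ R * h v * ∑ w, |A v w| * (x w ^ 2 / h w) := by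
    intro v
    refine (Finset.sum_sq_le_sum_mul_sum_of_sq_le_mul _ (f := fun w => |A v w| * h w)
      (g := fun w => |A v w| * (x w ^ 2 / h w))
      (fun w _ => mul_nonneg (abs_nonneg _) (hh w).le)
      (fun w _ => mul_nonneg (abs_nonneg _) (div_nonneg (sq_nonneg _) (hh w).le))
      fun w _ => le_of_eq ?_).trans ?_
    · field_simp [(hh w).ne']
      rw [sq_abs, mul_comm]
    · exact mul_le_mul_of_nonneg_right (hrow v)
        (Finset.sum_nonneg fun w _ => mul_nonneg (abs_nonneg _) (div_nonneg (sq_nonneg _) (hh w).le))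
  calc ∑ v, ((LinearMap.toContinuousLinearMap (Matrix.toEuclideanLin A)) x v) ^ 2
      = ∑ v, (∑ w, A v w * x w) ^ 2 := rfl
    _ ≤ ∑ v, R * h v * ∑ w, |A v w| * (x w ^ 2 / h w) := Finset.sum_le_sum fun v _ => hrow_cs v
    _ = R * ∑ w, (∑ v, |A v w| * h v) * (x w ^ 2 / h w) := by
      simp only [Finset.mul_sum, Finset.sum_mul]
      rw [Finset.sum_comm]
      exact Finset.sum_congr rfl fun _ _ => Finset.sum_congr rfl fun _ _ => by ring
    _ ≤ R * ∑ w, R * h w * (x w ^ 2 / h w) := by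
      gcongr with w
      · exact div_nonneg (sq_nonneg _) (hh w).le
      · exact hcol w
    _ = R ^ 2 * ∑ w, x w ^ 2 := by
      rw [Finset.mul_sum, Finset.mul_sum]
      exact Finset.sum_congr rfl fun w _ => by field_simp [(hh w).ne']

theorem symLapW_apply (M : Matrix (Fin n) (Fin n) ℝ) (v w : Fin n) :
    symLapW M v w =
      (1 : Matrix (Fin n) (Fin n) ℝ) v w - M v w / (√(∑ u, M v u) * √(∑ u, M w u)) := by
  simp only [symLapW, Matrix.sub_apply, mul_diagonal, diagonal_mul]
  ring

theorem symLapW_isSymm {M : Matrix (Fin n) (Fin n) ℝ} (hM : M.IsSymm) : (symLapW M).IsSymm :=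
  IsSymm.ext fun v w => by
    rw [symLapW_apply, symLapW_apply, hM.apply, isSymm_one.apply, mul_comm]

def removeLoops (M : Matrix (Fin n) (Fin n) ℝ) : Matrix (Fin n) (Fin n) ℝ :=
  Matrix.of fun v w => if v = w then 0 else M v w

theorem removeLoops_isSymm {M : Matrix (Fin n) (Fin n) ℝ} (hM : M.IsSymm) :
    (removeLoops M).IsSymm :=
  IsSymm.ext fun v w => by
    simp only [removeLoops, of_apply, hM.apply, eq_comm]

theorem sum_removeLoops_row (M : Matrix (Fin n) (Fin n) ℝ) (v : Fin n) :
    ∑ w, removeLoops M v w = ∑ w, M v w - M v v := by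
  simp only [removeLoops, of_apply]
  rw [← Finset.sum_erase_add _ _ (Finset.mem_univ v), if_pos rfl, add_zero,
    ← Finset.sum_erase_add _ _ (Finset.mem_univ v), add_sub_cancel_right]
  exact Finset.sum_congr rfl fun w hw => if_neg (Finset.ne_of_mem_erase hw).symm

theorem abs_div_sqrt_sub_div_sqrt_mul_sqrt_le {a b a₀ b₀ m ε : ℝ} (ha : 0 < a) (hb : 0 < b)
    (hε : ε < 1) (ha₀ : (1 - ε) * a ≤ a₀) (hb₀ : (1 - ε) * b ≤ b₀) (ha₀a : a₀ ≤ a) (hb₀b : b₀ ≤ b)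
    (hm : 0 ≤ m) :
    |m / (√a₀ * √b₀) - m / (√a * √b)| * √b ≤ m * (ε / (1 - ε)) / √a := by
  have h1ε : 0 < 1 - ε := by linarith
  have hsa₀ : √(1 - ε) * √a ≤ √a₀ := by
    rw [← Real.sqrt_mul h1ε.le]; exact Real.sqrt_le_sqrt ha₀
  have hsb₀ : √(1 - ε) * √b ≤ √b₀ := by
    rw [← Real.sqrt_mul h1ε.le]; exact Real.sqrt_le_sqrt hb₀
  have hlow : (1 - ε) * (√a * √b) ≤ √a₀ * √b₀ :=
    calc (1 - ε) * (√a * √b) = (√(1 - ε) * √a) * (√(1 - ε) * √b) := by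
          linear_combination (-(√a * √b)) * Real.mul_self_sqrt h1ε.le
      _ ≤ √a₀ * √b₀ := mul_le_mul hsa₀ hsb₀ (by positivity) (Real.sqrt_nonneg _)
  have hup : √a₀ * √b₀ ≤ √a * √b :=
    mul_le_mul (Real.sqrt_le_sqrt ha₀a) (Real.sqrt_le_sqrt hb₀b) (Real.sqrt_nonneg _)
      (Real.sqrt_nonneg _)
  have hpos : 0 < √a₀ * √b₀ := lt_of_lt_of_le (by positivity) hlow
  rw [abs_of_nonneg (sub_nonneg.2 (div_le_div_of_nonneg_left hm hpos hup))]
  calc (m / (√a₀ * √b₀) - m / (√a * √b)) * √b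
      ≤ (m / ((1 - ε) * (√a * √b)) - m / (√a * √b)) * √b := by
        gcongr
    _ = m * (ε / (1 - ε)) / √a := by
        field_simp
        ring

section RemoveLoops

variable {M : Matrix (Fin n) (Fin n) ℝ} (hM0 : ∀ v w, 0 ≤ M v w) (hdeg : ∀ v, 0 < ∑ w, M v w)
  {ε : ℝ} (hε1 : ε < 1) (hloop : ∀ v, M v v ≤ ε * ∑ w, M v w)
include hM0 hdeg hε1 hloop

theorem abs_symLapW_sub_removeLoops_apply_mul_sqrt_le (v w : Fin n) :
    |(symLapW M - symLapW (removeLoops M)) v w| * √(∑ u, M w u) ≤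
      (M v w * (ε / (1 - ε)) + if v = w then M v v else 0) / √(∑ u, M v u) := by
  rw [Matrix.sub_apply, symLapW_apply, symLapW_apply, sub_sub_sub_cancel_left,
    sum_removeLoops_row, sum_removeLoops_row]
  by_cases hvw : v = w
  · subst hvw
    have hs : √(∑ u, M v u) * √(∑ u, M v u) = ∑ u, M v u := Real.mul_self_sqrt (hdeg v).le
    have hsd : 0 < √(∑ u, M v u) := Real.sqrt_pos.2 (hdeg v)
    simp only [removeLoops, of_apply, if_true, zero_div, zero_sub, abs_neg]
    rw [hs, abs_of_nonneg (div_nonneg (hM0 v v) (hdeg v).le)]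
    calc M v v / (∑ u, M v u) * √(∑ u, M v u)
        = M v v / √(∑ u, M v u) := by
          rw [div_mul_eq_mul_div, div_eq_div_iff (hdeg v).ne' hsd.ne', mul_assoc, hs]
      _ ≤ (M v v * (ε / (1 - ε)) + M v v) / √(∑ u, M v u) := by
          have hε0 : 0 ≤ ε := nonneg_of_mul_nonneg_left ((hM0 v v).trans (hloop v)) (hdeg v)
          have : 0 ≤ 1 - ε := by linarith
          gcongr
          exact le_add_of_nonneg_left (by have := hM0 v v; positivity)
  · simp only [removeLoops, of_apply, if_neg hvw, add_zero]
    exact abs_div_sqrt_sub_div_sqrt_mul_sqrt_le (hdeg v) (hdeg w) hε1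
      (by linarith [hloop v]) (by linarith [hloop w]) (by linarith [hM0 v v])
      (by linarith [hM0 w w]) (hM0 v w)

theorem opNorm_symLapW_sub_symLapW_removeLoops_le (hM : M.IsSymm) (hε0 : 0 ≤ ε) :
    opNorm (symLapW M - symLapW (removeLoops M)) ≤ ε + ε / (1 - ε) := by
  have hc : 0 ≤ ε / (1 - ε) := div_nonneg hε0 (by linarith)
  have hrow : ∀ v, ∑ w, |(symLapW M - symLapW (removeLoops M)) v w| * √(∑ u, M w u) ≤
      (ε + ε / (1 - ε)) * √(∑ u, M v u) := fun v => by
    have hsd : 0 < √(∑ u, M v u) := Real.sqrt_pos.2 (hdeg v)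
    calc _ ≤ ∑ w, (M v w * (ε / (1 - ε)) + if v = w then M v v else 0) / √(∑ u, M v u) :=
          Finset.sum_le_sum fun w _ =>
            abs_symLapW_sub_removeLoops_apply_mul_sqrt_le hM0 hdeg hε1 hloop v w
      _ = ((∑ u, M v u) * (ε / (1 - ε)) + M v v) / √(∑ u, M v u) := by
          rw [← Finset.sum_div, Finset.sum_add_distrib, ← Finset.sum_mul,
            Finset.sum_ite_eq, if_pos (Finset.mem_univ v)]
      _ ≤ ((∑ u, M v u) * (ε / (1 - ε)) + ε * ∑ u, M v u) / √(∑ u, M v u) := by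
          grw [hloop v]
      _ = (ε + ε / (1 - ε)) * √(∑ u, M v u) := by
          rw [div_eq_iff hsd.ne', mul_assoc, Real.mul_self_sqrt (hdeg v).le]
          ring
  have hsymm := (symLapW_isSymm hM).sub (symLapW_isSymm (removeLoops_isSymm hM))
  refine opNorm_le_of_weighted_sum_le _ _ (fun v => Real.sqrt_pos.2 (hdeg v)) (by positivity)
    hrow fun w => ?_
  simpa only [hsymm.apply] using hrow w

end RemoveLoops

theorem nestedA_isSymm (n : ℕ) (p q K : ℝ) : (nestedA n p q K).IsSymm :=
  IsSymm.ext fun v w => by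
    simp only [nestedA, of_apply, and_comm]

theorem nestedA_nonneg {n : ℕ} {p q K : ℝ} (hp : 0 ≤ p) (hq : 0 ≤ q) (hK : 0 ≤ K)
    (v w : Fin n) : 0 ≤ nestedA n p q K v w := by
  simp only [nestedA, of_apply]
  split_ifs <;> positivity

theorem nestedA_apply_self {n : ℕ} (p q K : ℝ) (v : Fin n) :
    nestedA n p q K v v = if inP1 n v then K * p else p := by
  by_cases hv : inP1 n v
  all_goals
    simp only [hv, if_true, if_false, nestedA, of_apply, and_self, not_true_eq_false,
      not_false_eq_true]
    unfold inL1 inL2 inP1 at *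
    split_ifs <;> first | rfl | omega

theorem sum_nestedA_row (N : ℕ) (p q K : ℝ) (v : Fin (4 * N)) :
    ∑ w, nestedA (4 * N) p q K v w =
      if inP1 (4 * N) v then N * (K * p) + N * p + 2 * N * q else 2 * N * p + 2 * N * q := by
  have h4 : 4 * N / 4 = N := by omega
  have h2 : 4 * N / 2 = 2 * N := by omega
  set f : ℕ → ℝ := fun i =>
    if ((v : ℕ) < N ∧ i < N) ∨ ((N ≤ (v : ℕ) ∧ (v : ℕ) < 2 * N) ∧ (N ≤ i ∧ i < 2 * N)) then K * p
    else if (v : ℕ) < 2 * N ∧ i < 2 * N then p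
    else if ¬ (v : ℕ) < 2 * N ∧ ¬ i < 2 * N then p
    else q
  have hf : ∀ w : Fin (4 * N), nestedA (4 * N) p q K v w = f w := fun w => by
    simp only [nestedA, of_apply, inL1, inL2, inP1, h4, h2, f]
  have hconst : ∀ (a b : ℕ) (c : ℝ), (∀ i ∈ Finset.Ico a b, f i = c) →
      ∑ i ∈ Finset.Ico a b, f i = (b - a : ℕ) * c := fun a b c h => by
    rw [Finset.sum_congr rfl h, Finset.sum_const, Nat.card_Ico, nsmul_eq_mul]
  have e1 : ((2 * N - N : ℕ) : ℝ) = N := by rw [Nat.cast_sub (by omega)]; push_cast; ring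
  have e2 : ((4 * N - 2 * N : ℕ) : ℝ) = 2 * N := by rw [Nat.cast_sub (by omega)]; push_cast; ring
  rw [Finset.sum_congr rfl fun w _ => hf w, Fin.sum_univ_eq_sum_range f,
    ← Finset.sum_range_add_sum_Ico f (by omega : 2 * N ≤ 4 * N),
    ← Finset.sum_range_add_sum_Ico f (by omega : N ≤ 2 * N), Finset.range_eq_Ico,
    hconst 0 N (if (v : ℕ) < N then K * p else if (v : ℕ) < 2 * N then p else q),
    hconst N (2 * N) (if (v : ℕ) < N then p else if (v : ℕ) < 2 * N then K * p else q),
    hconst (2 * N) (4 * N) (if (v : ℕ) < 2 * N then q else p), e1, e2, Nat.sub_zero]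
  · unfold inP1
    rw [h2]
    split_ifs <;> first | omega | ring
  all_goals
    intro i hi
    rw [Finset.mem_Ico] at hi
    simp only [f]
    split_ifs <;> first | rfl | omega

theorem nested_selfLoop_bound_le {x K : ℝ} (hx : 1 ≤ x) (hK : 1 ≤ K) :
    K / (x * (K + 1)) + K / (x * (K + 1)) / (1 - K / (x * (K + 1))) ≤ 6 * K / (4 * x - 2) := by
  have hden : 0 < x * (K + 1) - K := by nlinarith
  have hfrac : K / (x * (K + 1)) / (1 - K / (x * (K + 1))) = K / (x * (K + 1) - K) := by
    have : 0 < x * (K + 1) := by positivity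
    field_simp
  have h1 : K / (x * (K + 1)) ≤ 2 * K / (4 * x - 2) := by
    rw [div_le_div_iff₀ (by positivity) (by linarith)]
    nlinarith [mul_nonneg (mul_nonneg (by linarith : (0 : ℝ) ≤ K) (by linarith : (0 : ℝ) ≤ x))
      (sub_nonneg.2 hK)]
  have h2 : K / (x * (K + 1) - K) ≤ 2 * K / (4 * x - 2) := by
    rw [div_le_div_iff₀ hden (by linarith)]
    nlinarith [mul_nonneg (sub_nonneg.2 hx) (sub_nonneg.2 hK)]
  have h3 : 2 * K / (4 * x - 2) + 2 * K / (4 * x - 2) ≤ 6 * K / (4 * x - 2) := by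
    rw [← add_div]
    gcongr
    · linarith
    · linarith
  linarith

/-- **Lemma (removing the expected self-loops barely changes `𝓛⋆`).**
For the nested block example, let `𝓛⋆` be the symmetric normalized Laplacian of `A⋆`
(self-loops included) and `𝓛⋆_nl` that of `A⋆ - P`, where `P` is the diagonal of `A⋆`.
Then `‖𝓛⋆ - 𝓛⋆_nl‖_op ≤ 6K/(n-2)`. -/
theorem normalized_laplacian_selfloop_removal
    (n : ℕ) (hn4 : 4 ∣ n) (hn0 : 0 < n)
    (p q K : ℝ) (hq0 : 0 < q) (hqp : q < p) (hK : 1 ≤ K) :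
    opNorm (symLapW (nestedA n p q K) -
        symLapW (Matrix.of fun v w => if v = w then 0 else nestedA n p q K v w)) ≤
      6 * K / ((n : ℝ) - 2) := by
  obtain ⟨N, rfl⟩ := hn4
  have hN : (1 : ℝ) ≤ N := by exact_mod_cast (by omega : 1 ≤ N)
  have hp : 0 < p := hq0.trans hqp
  have hK0 : 0 < K := by linarith
  set ε := K / (N * (K + 1))
  have hε1 : ε < 1 := by rw [div_lt_one (by positivity)]; nlinarith
  have hdeg : ∀ v, 0 < ∑ w, nestedA (4 * N) p q K v w := fun v => by
    rw [sum_nestedA_row]; split_ifs <;> positivity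
  have hloop : ∀ v, nestedA (4 * N) p q K v v ≤ ε * ∑ w, nestedA (4 * N) p q K v w := fun v => by
    rw [nestedA_apply_self, sum_nestedA_row, div_mul_eq_mul_div, le_div_iff₀ (by positivity)]
    split_ifs
    · nlinarith [mul_pos (mul_pos hK0 hq0) (by positivity : (0 : ℝ) < N)]
    · nlinarith [mul_pos (mul_pos hK0 hq0) (by positivity : (0 : ℝ) < N),
        mul_nonneg (mul_nonneg hp.le (by positivity : (0 : ℝ) ≤ N)) (sub_nonneg.2 hK)]
  calc _ ≤ ε + ε / (1 - ε) :=
        opNorm_symLapW_sub_symLapW_removeLoops_le (nestedA_nonneg hp.le hq0.le hK0.le) hdeg hε1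
          hloop (nestedA_isSymm _ p q K) (by positivity)
    _ ≤ 6 * K / (((4 * N : ℕ) : ℝ) - 2) := by
        push_cast
        exact nested_selfLoop_bound_le hN hK

end
end
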